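/- Let n be a positive integer with μ(n) = 0 (i.e., n is not square-free), H as above, and d_1 > 1 a divisor of γ(n). Then for every integer h ∈ H with ∑_{p|d_1} n/p − n/γ(n) < h < ∑_{p|d_1} n/p, one has ∑_{d | n, d ≠ d_1} μ(d) c_n(h + n/γ(n) − ∑_{p|d} n/p) = 0. -/

import Mathlib

open Polynomial Finset

/-- The Ramanujan sum `c_n(r) = ∑_{1 ≤ j ≤ n, gcd(j,n)=1} e^{2πijr/n}`. -/
noncomputable def ramanujanSum (n : ℕ) (r : ℤ) : ℂ :=
  ∑ j ∈ Finset.Icc 1 n, if Nat.gcd j n = 1 then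
    Complex.exp (2 * (Real.pi : ℂ) * Complex.I * (j : ℂ) * (r : ℂ) / (n : ℂ)) else 0

/-!
Write `Q = n / γ(n)`. Then `c_n(r) = 0` as soon as `Q ∤ r`: some prime power `p ^ k ∣ Q` does not
divide `r`, and `p ^ (k + 1) ∣ n`, so the translation `j ↦ j + n / p ^ k` permutes the residues
prime to `n` while multiplying every term of `c_n(r)` by the root of unity `e(r / p ^ k) ≠ 1`.
Every `∑_{p ∣ d} n / p` with `d ∣ n` is a multiple of `Q`, and `h` lies strictly between the
consecutive multiples `∑_{p ∣ d₁} n / p - Q` and `∑_{p ∣ d₁} n / p`, so no argument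
`h + Q - ∑_{p ∣ d} n / p` is divisible by `Q` and every term of the sum vanishes.
-/

theorem Nat.coprime_add_iff_of_forall_prime_dvd {a t n : ℕ}
    (ht : ∀ q, q.Prime → q ∣ n → q ∣ t) : (a + t).Coprime n ↔ a.Coprime n := by
  rw [← not_iff_not, Nat.Prime.not_coprime_iff_dvd, Nat.Prime.not_coprime_iff_dvd]
  exact exists_congr fun q => and_congr_right fun hq =>
    and_congr_left fun hqn => Nat.dvd_add_left (ht q hq hqn)

theorem ZMod.isUnit_add_natCast_iff {n t : ℕ} [NeZero n] (ht : ∀ q, q.Prime → q ∣ n → q ∣ t)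
    (x : ZMod n) : IsUnit (x + t) ↔ IsUnit x := by
  rw [← ZMod.natCast_zmod_val x, ← Nat.cast_add, ZMod.isUnit_iff_coprime, ZMod.isUnit_iff_coprime]
  exact Nat.coprime_add_iff_of_forall_prime_dvd ht

theorem AddChar.sum_filter_eq_zero_of_invariant {G R : Type*} [AddGroup G] [Fintype G]
    [CommRing R] [IsDomain R] (ψ : AddChar G R) {P : G → Prop} [DecidablePred P] {t : G}
    (hP : ∀ x, P (x + t) ↔ P x) (ht : ψ t ≠ 1) : ∑ x with P x, ψ x = 0 := by
  have hshift : ψ t * ∑ x with P x, ψ x = ∑ x with P x, ψ x := by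
    rw [Finset.mul_sum, Finset.sum_filter, Finset.sum_filter]
    refine Fintype.sum_equiv (Equiv.addRight t) _ _ fun x => ?_
    simp [hP, AddChar.map_add_eq_mul, mul_comm]
  by_contra hS
  exact ht ((mul_eq_right₀ hS).mp hshift)

theorem ramanujanSum_eq_sum_isUnit (n : ℕ) [NeZero n] (r : ℤ) :
    ramanujanSum n r = ∑ x : ZMod n with IsUnit x, ZMod.stdAddChar.mulShift (r : ZMod n) x := by
  rw [ramanujanSum, Finset.sum_filter]
  refine Finset.sum_nbij' (fun j => (j : ZMod n)) (fun x => (x - 1).val + 1) ?_ ?_ ?_ ?_ ?_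
  · simp
  · intro x _
    simpa using Nat.succ_le_of_lt (ZMod.val_lt (x - 1))
  · intro j hj
    obtain ⟨hj1, hjn⟩ := Finset.mem_Icc.mp hj
    rw [← Nat.cast_one, ← Nat.cast_sub hj1, ZMod.val_natCast_of_lt (by omega), Nat.sub_add_cancel hj1]
  · intro x _
    simp
  · intro j _
    refine if_congr (ZMod.isUnit_iff_coprime j n).symm ?_ rfl
    rw [AddChar.mulShift_apply,
      show (r : ZMod n) * j = ((r * j : ℤ) : ZMod n) by push_cast; rfl, ZMod.stdAddChar_coe]
    push_cast
    congr 1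
    ring

theorem ramanujanSum_eq_zero_of_pow_succ_dvd {n p k : ℕ} (hp : p.Prime) (hpn : p ^ (k + 1) ∣ n)
    {r : ℤ} (hr : ¬ (p : ℤ) ^ k ∣ r) : ramanujanSum n r = 0 := by
  rcases eq_or_ne n 0 with rfl | hn
  · simp [ramanujanSum]
  have : NeZero n := ⟨hn⟩
  obtain ⟨t, rfl⟩ := (pow_dvd_pow p k.le_succ).trans hpn
  have hpt : p ∣ t := by
    rw [pow_succ] at hpn
    exact (Nat.mul_dvd_mul_iff_left (pow_pos hp.pos k)).mp hpn
  have ht : t ≠ 0 := by rintro rfl; simp at hn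
  rw [ramanujanSum_eq_sum_isUnit]
  refine AddChar.sum_filter_eq_zero_of_invariant _ (t := (t : ZMod (p ^ k * t)))
    (ZMod.isUnit_add_natCast_iff (t := t) ?_) ?_
  · intro q hq hqn
    rcases hq.dvd_mul.mp hqn with hqp | hqt
    · rwa [(Nat.prime_dvd_prime_iff_eq hq hp).mp (hq.dvd_of_dvd_pow hqp)]
    · exact hqt
  · have hcast : (r : ZMod (p ^ k * t)) * (t : ZMod (p ^ k * t)) = ((r * t : ℤ) : ZMod _) := by
      push_cast; rfl
    rw [AddChar.mulShift_apply, ← AddChar.map_zero_eq_one (ZMod.stdAddChar (N := p ^ k * t)),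
      ZMod.injective_stdAddChar.ne_iff, hcast, Ne, ZMod.intCast_zmod_eq_zero_iff_dvd]
    push_cast
    rwa [Int.mul_dvd_mul_iff_right (by exact_mod_cast ht)]

theorem pow_succ_dvd_of_pow_dvd_div_prod_primeFactors {n p k : ℕ} (hn : n ≠ 0) (hp : p.Prime)
    (hk : k ≠ 0) (hpk : p ^ k ∣ n / ∏ q ∈ n.primeFactors, q) : p ^ (k + 1) ∣ n := by
  have hpn : p ∣ n :=
    (dvd_pow_self p hk).trans (hpk.trans (Nat.div_dvd_of_dvd (Nat.prod_primeFactors_dvd n)))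
  rw [← Nat.div_mul_cancel (Nat.prod_primeFactors_dvd n), pow_succ]
  exact mul_dvd_mul hpk (Finset.dvd_prod_of_mem _ (Nat.mem_primeFactors.mpr ⟨hp, hpn, hn⟩))

theorem ramanujanSum_eq_zero_of_not_dvd {n : ℕ} (hn : n ≠ 0) {r : ℤ}
    (hr : ¬ ((n / ∏ p ∈ n.primeFactors, p : ℕ) : ℤ) ∣ r) : ramanujanSum n r = 0 := by
  rw [Int.natCast_dvd, Nat.dvd_iff_prime_pow_dvd_dvd] at hr
  push Not at hr
  obtain ⟨p, k, hp, hpk, hpkr⟩ := hr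
  have hk : k ≠ 0 := by rintro rfl; simp at hpkr
  refine ramanujanSum_eq_zero_of_pow_succ_dvd hp
    (pow_succ_dvd_of_pow_dvd_div_prod_primeFactors hn hp hk hpk) fun hdvd => hpkr ?_
  rw [← Int.natCast_dvd]
  exact_mod_cast hdvd

theorem div_prod_primeFactors_dvd_sum {n d : ℕ} (hn : n ≠ 0) (hd : d ∣ n) :
    ((n / ∏ p ∈ n.primeFactors, p : ℕ) : ℤ) ∣ ∑ q ∈ d.primeFactors, ((n / q : ℕ) : ℤ) :=
  Finset.dvd_sum fun _ hq => Int.natCast_dvd_natCast.mpr <|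
    Nat.div_dvd_div_left (Nat.prod_primeFactors_dvd n)
      (Finset.dvd_prod_of_mem _ (Nat.primeFactors_mono hd hn hq))

theorem ramanujan_sum_vanishing_nonsquarefree (n : ℕ) (hn : 1 ≤ n) (d₁ : ℕ)
    (hd₁ : d₁ ∣ ∏ p ∈ n.primeFactors, p) (h : ℕ)
    (hlow : (∑ p ∈ d₁.primeFactors, ((n / p : ℕ) : ℤ)) -
        ((n / (∏ p ∈ n.primeFactors, p) : ℕ) : ℤ) < (h : ℤ))
    (hhigh : (h : ℤ) < ∑ p ∈ d₁.primeFactors, ((n / p : ℕ) : ℤ)) :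
    ∑ d ∈ n.divisors.erase d₁, (ArithmeticFunction.moebius d : ℂ) *
        ramanujanSum n
          ((h : ℤ) + ((n / (∏ p ∈ n.primeFactors, p) : ℕ) : ℤ) -
            ∑ p ∈ d.primeFactors, ((n / p : ℕ) : ℤ)) = 0 := by
  have hn0 : n ≠ 0 := by omega
  set Q : ℤ := ((n / ∏ p ∈ n.primeFactors, p : ℕ) : ℤ)
  have hQh : ¬ Q ∣ h := fun hQdvd => by
    have hQM := div_prod_primeFactors_dvd_sum hn0 (hd₁.trans (Nat.prod_primeFactors_dvd n))
    have := Int.le_of_dvd (by omega) (dvd_sub hQM hQdvd)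
    omega
  refine Finset.sum_eq_zero fun d hd => ?_
  have hQd :=
    div_prod_primeFactors_dvd_sum hn0 (Nat.dvd_of_mem_divisors (Finset.mem_of_mem_erase hd))
  rw [ramanujanSum_eq_zero_of_not_dvd hn0 fun hQr => hQh ?_, mul_zero]
  rw [show (h : ℤ) = (h + Q - ∑ p ∈ d.primeFactors, ((n / p : ℕ) : ℤ)) +
    ∑ p ∈ d.primeFactors, ((n / p : ℕ) : ℤ) - Q by ring]
  exact dvd_sub (dvd_add hQr hQd) dvd_rfl
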